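/- Let T : c₀ → c₀ be Tx = x − f(x)e₁ with f(x) = ∑_{j≥2} 2^{1-j} x_j, and let K : c₀ → c₀ be Kx = f(x)e₁. Then K is a compact (rank-one) operator, T + K is the identity on c₀, and m(T+K) = 1 > 1/2 = m(T). -/
import Mathlib
set_option maxHeartbeats 1000000

open Filter Topology

/-- The minimum modulus of a bounded operator. -/
noncomputable def minMod {X Y : Type*} [NormedAddCommGroup X] [NormedAddCommGroup Y]
    [NormedSpace ℝ X] [NormedSpace ℝ Y] (T : X →L[ℝ] Y) : ℝ :=
  sInf ((fun x => ‖T x‖) '' {x : X | ‖x‖ = 1})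

noncomputable def c0mk (g : ℕ → ℝ) (N : ℕ) (hg : ∀ k, N ≤ k → g k = 0) :
    ZeroAtInftyContinuousMap ℕ ℝ where
  toFun := g
  continuous_toFun := continuous_of_discreteTopology
  zero_at_infty' := by
    rw [cocompact_eq_atTop]
    refine tendsto_const_nhds.congr' ?_
    filter_upwards [Filter.eventually_atTop.2 ⟨N, hg⟩] with k hk using hk.symm

@[simp] lemma c0mk_apply (g : ℕ → ℝ) (N : ℕ) (hg : ∀ k, N ≤ k → g k = 0) (k : ℕ) :
    c0mk g N hg k = g k := rfl

lemma c0_abs_le (x : ZeroAtInftyContinuousMap ℕ ℝ) (k : ℕ) : |x k| ≤ ‖x‖ := by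
  rw [← ZeroAtInftyContinuousMap.norm_toBCF_eq_norm]
  exact x.toBCF.norm_coe_le_norm k

lemma c0_norm_le (x : ZeroAtInftyContinuousMap ℕ ℝ) {C : ℝ} (hC : 0 ≤ C)
    (h : ∀ k, |x k| ≤ C) : ‖x‖ ≤ C := by
  rw [← ZeroAtInftyContinuousMap.norm_toBCF_eq_norm]
  exact (BoundedContinuousFunction.norm_le hC).2 h

noncomputable def wt (j : ℕ) : ℝ := if j = 0 then 0 else ((2:ℝ)⁻¹) ^ j

lemma wt_nonneg (j : ℕ) : 0 ≤ wt j := by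
  unfold wt; split <;> positivity

lemma wt_le (j : ℕ) : wt j ≤ ((2:ℝ)⁻¹) ^ j := by
  unfold wt; split
  · positivity
  · exact le_rfl

lemma wt_summable : Summable wt :=
  (summable_geometric_of_lt_one (by norm_num) (by norm_num)).of_nonneg_of_le wt_nonneg wt_le

lemma wt_hasSum : HasSum wt 1 := by
  have h0 : wt 0 = 0 := by simp [wt]
  have hstep : ∀ j : ℕ, wt (j + 1) = (2:ℝ)⁻¹ * (2:ℝ)⁻¹ ^ j := by
    intro j; simp [wt, pow_succ, mul_comm]
  have : ∑' j, wt j = 1 := by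
    rw [Summable.tsum_eq_zero_add wt_summable, h0, zero_add, tsum_congr hstep, tsum_mul_left,
      tsum_geometric_of_lt_one (by norm_num) (by norm_num)]
    norm_num
  exact this ▸ wt_summable.hasSum

lemma abs_tsum_wt_le {x : ℕ → ℝ} {C : ℝ} (hx : ∀ j, j ≠ 0 → |x j| ≤ C) :
    |∑' j, wt j * x j| ≤ C := by
  have hg : HasSum (fun j => wt j * C) C := by
    simpa using wt_hasSum.mul_right C
  have := tsum_of_norm_bounded hg (f := fun j => wt j * x j) (fun j => ?_)
  · simpa using this
  · rw [Real.norm_eq_abs, abs_mul, abs_of_nonneg (wt_nonneg j)]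
    rcases eq_or_ne j 0 with h | h
    · simp [h, wt]
    · exact mul_le_mul_of_nonneg_left (hx j h) (wt_nonneg j)

lemma wt_partial (n : ℕ) : ∑ j ∈ Finset.range (n + 1), wt j = 1 - (2:ℝ)⁻¹ ^ n := by
  induction n with
  | zero => simp [wt]
  | succ n ih =>
      rw [Finset.sum_range_succ, ih]
      have : wt (n + 1) = (2:ℝ)⁻¹ ^ (n+1) := by simp [wt]
      rw [this, pow_succ]
      ring

/-- With T x = x - f(x) e₁ and K x = f(x) e₁ on c₀, K is compact of
rank one, T + K is the identity, and m(T+K) = 1 > 1/2 = m(T). -/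
theorem stmt_4
    (f : ZeroAtInftyContinuousMap ℕ ℝ →L[ℝ] ℝ)
    (hf : ∀ x : ZeroAtInftyContinuousMap ℕ ℝ,
      f x = ∑' j : ℕ, (if j = 0 then 0 else ((2 : ℝ)⁻¹) ^ j) * x j)
    (e₁ : ZeroAtInftyContinuousMap ℕ ℝ)
    (he₁ : ⇑e₁ = fun k => if k = 0 then 1 else 0)
    (T K : ZeroAtInftyContinuousMap ℕ ℝ →L[ℝ] ZeroAtInftyContinuousMap ℕ ℝ)
    (hT : ∀ x, T x = x - f x • e₁)
    (hK : ∀ x, K x = f x • e₁) :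
    IsCompactOperator K ∧
    Module.finrank ℝ (LinearMap.range (K : ZeroAtInftyContinuousMap ℕ ℝ →ₗ[ℝ]
      ZeroAtInftyContinuousMap ℕ ℝ)) = 1 ∧
    T + K = ContinuousLinearMap.id ℝ (ZeroAtInftyContinuousMap ℕ ℝ) ∧
    minMod (T + K) = 1 ∧ (1 : ℝ) > 1 / 2 ∧ minMod T = 1 / 2 := by
  have hfx : ∀ x : ZeroAtInftyContinuousMap ℕ ℝ, f x = ∑' j, wt j * x j := fun x => hf x
  -- basic facts about e₁
  have he₁0 : e₁ 0 = 1 := by simp [he₁]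
  have he₁k : ∀ k, k ≠ 0 → e₁ k = 0 := fun k hk => by simp [he₁, hk]
  have he₁norm : ‖e₁‖ = 1 := by
    refine le_antisymm (c0_norm_le _ zero_le_one fun k => ?_) ?_
    · rcases eq_or_ne k 0 with h | h
      · simp [h, he₁0]
      · simp [he₁k k h]
    · have := c0_abs_le e₁ 0
      rwa [he₁0, abs_one] at this
  have he₁ne : e₁ ≠ 0 := by
    intro h
    have : e₁ 0 = 0 := by rw [h]; rfl
    rw [he₁0] at this; norm_num at this
  -- T + K = id
  have hTK : T + K = ContinuousLinearMap.id ℝ (ZeroAtInftyContinuousMap ℕ ℝ) := by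
    refine ContinuousLinearMap.ext fun x => ?_
    rw [ContinuousLinearMap.add_apply, hT x, hK x, ContinuousLinearMap.id_apply,
      sub_add_cancel]
  -- the vector w with f w = 1/2
  have hw2 : ∀ k, 2 ≤ k → (if k = 1 then (1:ℝ) else 0) = 0 := by
    intro k hk
    rw [if_neg (by omega)]
  set w : ZeroAtInftyContinuousMap ℕ ℝ := c0mk (fun k => if k = 1 then 1 else 0) 2 hw2 with hwdef
  have hfw : f w = 2⁻¹ := by
    rw [hfx]
    rw [tsum_eq_single 1 (fun b hb => ?_)]
    · simp [hwdef, wt]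
    · rcases eq_or_ne b 0 with h | h
      · simp [h, wt]
      · have : w b = 0 := by simp [hwdef]; omega
        simp [this]
  refine ⟨?_, ?_, hTK, ?_, by norm_num, ?_⟩
  · -- compactness
    refine ⟨(fun t : ℝ => t • e₁) '' Metric.closedBall 0 1,
      (isCompact_closedBall 0 1).image (continuous_id.smul continuous_const), ?_⟩
    have h1 : f ⁻¹' Metric.closedBall 0 1 ∈ 𝓝 (0 : ZeroAtInftyContinuousMap ℕ ℝ) := by
      have := f.continuous.continuousAt (x := 0)
      refine this.preimage_mem_nhds ?_
      rw [map_zero]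
      exact Metric.closedBall_mem_nhds 0 one_pos
    refine Filter.mem_of_superset h1 fun x hx => ?_
    exact ⟨f x, hx, (hK x).symm⟩
  · -- rank one
    have hrange : LinearMap.range (K : ZeroAtInftyContinuousMap ℕ ℝ →ₗ[ℝ]
        ZeroAtInftyContinuousMap ℕ ℝ) = Submodule.span ℝ {e₁} := by
      apply le_antisymm
      · rintro y ⟨x, rfl⟩
        simp only [ContinuousLinearMap.coe_coe, hK x]
        exact Submodule.smul_mem _ _ (Submodule.mem_span_singleton_self e₁)
      · rw [Submodule.span_singleton_le_iff_mem]
        refine ⟨(2:ℝ) • w, ?_⟩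
        simp only [ContinuousLinearMap.coe_coe, hK, map_smul, smul_eq_mul, hfw]
        rw [smul_smul]
        norm_num
    rw [hrange, finrank_span_singleton he₁ne]
  · -- minMod (T+K) = 1
    rw [hTK]
    have himg : (fun x => ‖(ContinuousLinearMap.id ℝ (ZeroAtInftyContinuousMap ℕ ℝ)) x‖) ''
        {x : ZeroAtInftyContinuousMap ℕ ℝ | ‖x‖ = 1} = {1} := by
      ext r
      constructor
      · rintro ⟨x, hx, rfl⟩
        simpa using hx
      · rintro rfl
        exact ⟨e₁, he₁norm, by simpa using he₁norm⟩
    rw [minMod, himg, csInf_singleton]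
  · -- minMod T = 1/2
    have hTcoord : ∀ (x : ZeroAtInftyContinuousMap ℕ ℝ) (k : ℕ),
        (T x) k = x k - f x * e₁ k := by
      intro x k
      rw [hT x]
      simp
    have lower : ∀ x : ZeroAtInftyContinuousMap ℕ ℝ, ‖x‖ = 1 → 1/2 ≤ ‖T x‖ := by
      intro x hx
      have hM : ∀ j, j ≠ 0 → |x j| ≤ ‖T x‖ := by
        intro j hj
        have h := c0_abs_le (T x) j
        rwa [hTcoord, he₁k j hj, mul_zero, sub_zero] at h
      have hfle : |f x| ≤ ‖T x‖ := by rw [hfx]; exact abs_tsum_wt_le hM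
      have h0 : |x 0| ≤ 2 * ‖T x‖ := by
        have h := c0_abs_le (T x) 0
        rw [hTcoord, he₁0, mul_one] at h
        calc |x 0| = |(x 0 - f x) + f x| := by ring_nf
          _ ≤ |x 0 - f x| + |f x| := abs_add_le _ _
          _ ≤ 2 * ‖T x‖ := by linarith
      have hle : ‖x‖ ≤ 2 * ‖T x‖ := by
        refine c0_norm_le _ (by positivity) fun k => ?_
        rcases eq_or_ne k 0 with h | h
        · rw [h]; exact h0
        · have := hM k h
          have hn := norm_nonneg (T x)
          linarith
      rw [hx] at hle
      linarith
    have hbdd : BddBelow ((fun x => ‖T x‖) ''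
        {x : ZeroAtInftyContinuousMap ℕ ℝ | ‖x‖ = 1}) := by
      refine ⟨0, ?_⟩
      rintro b ⟨x, hx, rfl⟩
      exact norm_nonneg _
    have hne : ((fun x => ‖T x‖) ''
        {x : ZeroAtInftyContinuousMap ℕ ℝ | ‖x‖ = 1}).Nonempty :=
      ⟨‖T e₁‖, e₁, he₁norm, rfl⟩
    refine le_antisymm ?_ (le_csInf hne ?_)
    · -- minMod T ≤ 1/2
      refine le_of_forall_pos_le_add fun ε hε => ?_
      obtain ⟨n, hn⟩ := exists_pow_lt_of_lt_one hε (show ((2:ℝ)⁻¹) < 1 by norm_num)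
      -- test vector
      have hg0 : ∀ k, n + 1 ≤ k →
          (if k = 0 then (1:ℝ) else if k ≤ n then 1/2 else 0) = 0 := by
        intro k hk
        rw [if_neg (by omega), if_neg (by omega)]
      set xn : ZeroAtInftyContinuousMap ℕ ℝ :=
        c0mk (fun k => if k = 0 then 1 else if k ≤ n then 1/2 else 0) (n+1) hg0 with hxn
      have hxnk : ∀ k, xn k = if k = 0 then 1 else if k ≤ n then 1/2 else 0 := fun k => rfl
      have hxnnorm : ‖xn‖ = 1 := by
        refine le_antisymm (c0_norm_le _ zero_le_one fun k => ?_) ?_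
        · rw [hxnk]
          split
          · norm_num
          · split
            · rw [abs_of_nonneg (by norm_num)]; norm_num
            · norm_num
        · have := c0_abs_le xn 0
          rw [hxnk] at this
          simpa using this
      have hfxn : f xn = (1 - (2:ℝ)⁻¹ ^ n) / 2 := by
        have hzero : ∀ b ∉ Finset.range (n+1), wt b * xn b = 0 := by
          intro b hb
          rw [Finset.mem_range] at hb
          have hb' : n + 1 ≤ b := by omega
          have hx0 : xn b = 0 := by rw [hxnk, if_neg (by omega), if_neg (by omega)]
          rw [hx0, mul_zero]
        rw [hfx, tsum_eq_sum hzero]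
        have hcong : ∀ j ∈ Finset.range (n+1), wt j * xn j = wt j * (1/2) := by
          intro j hj
          rcases eq_or_ne j 0 with h | h
          · simp [h, wt]
          · rw [hxnk, if_neg h,
              if_pos (Nat.lt_succ_iff.mp (Finset.mem_range.mp hj))]
        rw [Finset.sum_congr rfl hcong, ← Finset.sum_mul, wt_partial]
        ring
      have hTxn : ‖T xn‖ ≤ 1/2 + (2:ℝ)⁻¹ ^ n := by
        have hp : (0:ℝ) ≤ (2:ℝ)⁻¹ ^ n := by positivity
        refine c0_norm_le _ (by linarith) fun k => ?_
        rw [hTcoord]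
        rcases eq_or_ne k 0 with h | h
        · rw [h, he₁0, mul_one, hxnk, if_pos rfl, hfxn]
          rw [abs_of_nonneg (by nlinarith [pow_le_one₀ (by norm_num : (0:ℝ) ≤ 2⁻¹) (by norm_num : (2:ℝ)⁻¹ ≤ 1) (n := n)])]
          nlinarith
        · rw [he₁k k h, mul_zero, sub_zero, hxnk, if_neg h]
          split
          · rw [abs_of_nonneg (by norm_num)]; linarith
          · simp; positivity
      have hstep : minMod T ≤ ‖T xn‖ := csInf_le hbdd ⟨xn, hxnnorm, rfl⟩
      calc minMod T ≤ ‖T xn‖ := hstep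
        _ ≤ 1/2 + (2:ℝ)⁻¹ ^ n := hTxn
        _ ≤ 1/2 + ε := by linarith
    · rintro b ⟨x, hx, rfl⟩
      exact lower x hx
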